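/- arXiv:2109.09698 — 3 statements merged into one kernel-verified Lean document; each statement's English description precedes it below -/
import Mathlib

section
/- Let a^{ij} ∈ L^∞(Ω), 1 ≤ i,j ≤ d, be symmetric (a^{ij} = a^{ji}), and suppose for some ε ∈ (0,1] the Cordès condition Σ_{i,j}(a^{ij})² / (Σᵢ a^{ii})² ≤ 1/(d−1+ε) holds almost everywhere in Ω, together with uniform ellipticity λ|η|² ≤ Σ_{i,j} a^{ij} ηᵢηⱼ ≤ Λ|η|². Define θ := (Σᵢ a^{ii})/(Σ_{i,j}(a^{ij})²). Then for every open U ⊆ Ω and v ∈ H²(U), |θ L v − Δv| ≤ √(1−ε) |D²v| almost everywhere in U, where L v = Σ_{i,j} a^{ij} ∂²v/∂xᵢ∂xⱼ and |D²v|² = Σ_{i,j} (∂²v/∂xᵢ∂xⱼ)². -/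
open MeasureTheory

/-- First-order partial derivative `∂u/∂xᵢ`. -/
noncomputable def pderiv1 {d : ℕ} (u : EuclideanSpace ℝ (Fin d) → ℝ) (i : Fin d)
    (x : EuclideanSpace ℝ (Fin d)) : ℝ :=
  fderiv ℝ u x (EuclideanSpace.single i 1)

/-- Second-order partial derivative `∂²u/∂xᵢ∂xⱼ`. -/
noncomputable def pderiv2 {d : ℕ} (u : EuclideanSpace ℝ (Fin d) → ℝ) (i j : Fin d)
    (x : EuclideanSpace ℝ (Fin d)) : ℝ :=
  pderiv1 (pderiv1 u j) i x

/-- The Laplacian `Δu = Σᵢ ∂²u/∂xᵢ²`. -/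
noncomputable def lap {d : ℕ} (u : EuclideanSpace ℝ (Fin d) → ℝ)
    (x : EuclideanSpace ℝ (Fin d)) : ℝ :=
  ∑ i, pderiv2 u i i x

private lemma cordes_key {d : ℕ} (Ω : Set (EuclideanSpace ℝ (Fin d)))
    (a : Fin d → Fin d → EuclideanSpace ℝ (Fin d) → ℝ)
    (ε : ℝ) (hε : ε ∈ Set.Ioc (0 : ℝ) 1)
    (lam Lam : ℝ) (hlam : 0 < lam)
    (hell : ∀ x ∈ Ω, ∀ η : Fin d → ℝ,
      lam * ∑ i, (η i) ^ 2 ≤ (∑ i, ∑ j, a i j x * η i * η j) ∧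
      (∑ i, ∑ j, a i j x * η i * η j) ≤ Lam * ∑ i, (η i) ^ 2)
    (hcordes : ∀ x ∈ Ω,
      (∑ i, ∑ j, (a i j x) ^ 2) / (∑ i, a i i x) ^ 2 ≤ 1 / ((d : ℝ) - 1 + ε))
    (x : EuclideanSpace ℝ (Fin d)) (hxΩ : x ∈ Ω) (M : Fin d → Fin d → ℝ) :
        |((∑ i, a i i x) / (∑ i, ∑ j, (a i j x) ^ 2)) *
            (∑ i, ∑ j, a i j x * M i j) - ∑ i, M i i| ≤
          Real.sqrt (1 - ε) * Real.sqrt (∑ i, ∑ j, (M i j) ^ 2) := by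
  rcases Nat.eq_zero_or_pos d with hd | hd
  · subst hd; simp
  set A : Fin d → Fin d → ℝ := fun i j => a i j x with hA
  set t : ℝ := ∑ i, A i i with ht
  set s : ℝ := ∑ i, ∑ j, A i j ^ 2 with hs
  have haii : ∀ i, lam ≤ A i i := by
    intro i
    have h := (hell x hxΩ (fun j => if j = i then 1 else 0)).1
    simpa [mul_ite, ite_mul, Finset.sum_ite_eq, Finset.sum_ite_eq'] using h
  have i0 : Fin d := ⟨0, hd⟩
  have ht0 : 0 < t := by
    have : (d : ℝ) * lam ≤ t := by
      rw [ht]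
      calc (d:ℝ) * lam = ∑ _i : Fin d, lam := by simp [mul_comm]
      _ ≤ _ := Finset.sum_le_sum fun i _ => haii i
    have hdl : 0 < (d:ℝ) * lam := by positivity
    linarith
  have hs0 : 0 < s := by
    have h1 : A i0 i0 ^ 2 ≤ ∑ j, A i0 j ^ 2 :=
      Finset.single_le_sum (f := fun j => A i0 j ^ 2) (fun j _ => sq_nonneg _)
        (Finset.mem_univ i0)
    have h2 : ∑ j, A i0 j ^ 2 ≤ s :=
      Finset.single_le_sum (f := fun i => ∑ j, A i j ^ 2)
        (fun i _ => Finset.sum_nonneg fun j _ => sq_nonneg _) (Finset.mem_univ i0)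
    nlinarith [lt_of_lt_of_le hlam (haii i0)]
  set B : Fin d → Fin d → ℝ := fun i j => t / s * A i j - (if i = j then 1 else 0) with hB
  have hrw : (t / s) * (∑ i, ∑ j, A i j * M i j) - ∑ i, M i i
      = ∑ i, ∑ j, B i j * M i j := by
    simp only [hB, sub_mul, ite_mul, one_mul, zero_mul, Finset.sum_sub_distrib,
      Finset.sum_ite_eq, Finset.sum_ite_eq', Finset.mem_univ, if_true, mul_assoc,
      ← Finset.mul_sum]
  have hBsq : ∑ i, ∑ j, B i j ^ 2 = (t/s)^2 * s - 2*(t/s)*t + d := by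
    have hterm : ∀ i j : Fin d, B i j ^ 2 =
        (t/s)^2 * A i j ^ 2 - 2*(t/s) * (A i j * (if i = j then 1 else 0))
          + (if i = j then (1:ℝ) else 0) := by
      intro i j; by_cases h : i = j <;> simp [hB, h] <;> ring
    simp only [hterm, Finset.sum_add_distrib, Finset.sum_sub_distrib, ← Finset.mul_sum,
      mul_ite, mul_one, mul_zero, Finset.sum_ite_eq, Finset.sum_ite_eq', Finset.mem_univ,
      if_true, Finset.sum_const, Finset.card_univ, Fintype.card_fin, nsmul_eq_mul, mul_one]
    try rw [← ht, ← hs]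
    try ring
  have hBval : ∑ i, ∑ j, B i j ^ 2 = (d:ℝ) - t^2/s := by
    rw [hBsq]; field_simp; ring
  have hd1 : 0 < (d:ℝ) - 1 + ε := by
    have : (1:ℝ) ≤ d := by exact_mod_cast hd
    linarith [hε.1]
  have hcor : s / t^2 ≤ 1 / ((d:ℝ) - 1 + ε) := hcordes x hxΩ
  have hts : (d:ℝ) - 1 + ε ≤ t^2/s := by
    rw [div_le_div_iff₀ (by positivity) hd1] at hcor
    rw [le_div_iff₀ hs0]
    nlinarith
  have hBle : ∑ i, ∑ j, B i j ^ 2 ≤ 1 - ε := by rw [hBval]; linarith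
  rw [hrw]
  have hcs : (∑ i, ∑ j, B i j * M i j)^2 ≤ (∑ i, ∑ j, B i j ^ 2) * (∑ i, ∑ j, M i j ^ 2) := by
    have := Finset.sum_mul_sq_le_sq_mul_sq Finset.univ (fun p : Fin d × Fin d => B p.1 p.2)
      (fun p => M p.1 p.2)
    simpa [Fintype.sum_prod_type] using this
  have hM0 : (0:ℝ) ≤ ∑ i, ∑ j, M i j ^ 2 :=
    Finset.sum_nonneg fun i _ => Finset.sum_nonneg fun j _ => sq_nonneg _
  calc |∑ i, ∑ j, B i j * M i j| = Real.sqrt ((∑ i, ∑ j, B i j * M i j)^2) :=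
        (Real.sqrt_sq_eq_abs _).symm
    _ ≤ Real.sqrt ((∑ i, ∑ j, B i j ^ 2) * (∑ i, ∑ j, M i j ^ 2)) := Real.sqrt_le_sqrt hcs
    _ ≤ Real.sqrt ((1 - ε) * (∑ i, ∑ j, M i j ^ 2)) := by
        apply Real.sqrt_le_sqrt; exact mul_le_mul_of_nonneg_right hBle hM0
    _ = Real.sqrt (1 - ε) * Real.sqrt (∑ i, ∑ j, M i j ^ 2) := Real.sqrt_mul (by linarith [hε.2]) _


/-- Smears–Süli pointwise Cordès estimate: for symmetric bounded elliptic
coefficients satisfying the Cordès condition with parameter `ε`, with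
`θ = (Σᵢ aᶦᶦ)/(Σ_{i,j}(aᶦʲ)²)`, one has `|θ·Lv − Δv| ≤ √(1−ε)|D²v|` on every
open `U ⊆ Ω` for `v ∈ H²(U)`. -/
theorem stmt6 {d : ℕ} (Ω : Set (EuclideanSpace ℝ (Fin d)))
    (a : Fin d → Fin d → EuclideanSpace ℝ (Fin d) → ℝ)
    (hbdd : ∃ M : ℝ, ∀ i j, ∀ x ∈ Ω, |a i j x| ≤ M)
    (hsym : ∀ i j, ∀ x ∈ Ω, a i j x = a j i x)
    (ε : ℝ) (hε : ε ∈ Set.Ioc (0 : ℝ) 1)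
    (lam Lam : ℝ) (hlam : 0 < lam)
    (hell : ∀ x ∈ Ω, ∀ η : Fin d → ℝ,
      lam * ∑ i, (η i) ^ 2 ≤ (∑ i, ∑ j, a i j x * η i * η j) ∧
      (∑ i, ∑ j, a i j x * η i * η j) ≤ Lam * ∑ i, (η i) ^ 2)
    (hcordes : ∀ x ∈ Ω,
      (∑ i, ∑ j, (a i j x) ^ 2) / (∑ i, a i i x) ^ 2 ≤ 1 / ((d : ℝ) - 1 + ε)) :
    ∀ U ⊆ Ω, IsOpen U → ∀ v : EuclideanSpace ℝ (Fin d) → ℝ, ContDiffOn ℝ 2 v U →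
      ∀ x ∈ U,
        |((∑ i, a i i x) / (∑ i, ∑ j, (a i j x) ^ 2)) *
            (∑ i, ∑ j, a i j x * pderiv2 v i j x) - lap v x| ≤
          Real.sqrt (1 - ε) * Real.sqrt (∑ i, ∑ j, (pderiv2 v i j x) ^ 2) := by
  intro U hU _ v _ x hx
  have h := cordes_key Ω a ε hε lam Lam hlam hell hcordes x (hU hx)
    (fun i j => pderiv2 v i j x)
  simpa [lap] using h
end

section
/- Let A be a symmetric d×d real matrix with tr(A) > 0 satisfying the Cordès condition |A|_F² / (tr A)² ≤ 1/(d−1+ε) for some ε ∈ (0,1], and set θ = tr(A)/|A|_F². Then for every symmetric d×d matrix M, |θ ⟨A, M⟩_F − tr(M)| ≤ √(1−ε) |M|_F, where ⟨A,M⟩_F = Σ_{i,j} A_{ij}M_{ij} is the Frobenius inner product and |M|_F the Frobenius norm. -/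
/-- Linear-algebra form of the Cordès estimate: if the symmetric matrix `A`
has positive trace and satisfies `|A|_F²/(tr A)² ≤ 1/(d−1+ε)`, then with
`θ = tr(A)/|A|_F²` one has `|θ⟨A,M⟩_F − tr M| ≤ √(1−ε)|M|_F` for every
symmetric `M`. -/
theorem stmt7 {d : ℕ} (A : Matrix (Fin d) (Fin d) ℝ) (hA : A.IsSymm)
    (htr : 0 < A.trace) (ε : ℝ) (hε : ε ∈ Set.Ioc (0 : ℝ) 1)
    (hcordes : (∑ i, ∑ j, (A i j) ^ 2) / (A.trace) ^ 2 ≤ 1 / ((d : ℝ) - 1 + ε)) :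
    ∀ M : Matrix (Fin d) (Fin d) ℝ, M.IsSymm →
      |(A.trace / (∑ i, ∑ j, (A i j) ^ 2)) * (∑ i, ∑ j, A i j * M i j) - M.trace| ≤
        Real.sqrt (1 - ε) * Real.sqrt (∑ i, ∑ j, (M i j) ^ 2) := by
  intro M hM
  have hd : 1 ≤ d := by
    by_contra h
    push_neg at h
    interval_cases d
    · simp [Matrix.trace] at htr
  set T : ℝ := A.trace with hT
  set S : ℝ := ∑ i, ∑ j, (A i j) ^ 2 with hSdef
  have hTtr : T = ∑ i, A i i := by
    simp [hT, Matrix.trace, Matrix.diag]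
  have hS : 0 < S := by
    rcases (by positivity : (0:ℝ) ≤ S).lt_or_eq with h | h
    · exact h
    exfalso
    have hS0 : (∑ i, ∑ j, (A i j) ^ 2) = 0 := h.symm
    have hall : ∀ i, A i i = 0 := by
      intro i
      have h2 := (Finset.sum_eq_zero_iff_of_nonneg (fun i _ => by positivity)).mp hS0 i
        (Finset.mem_univ i)
      have h3 := (Finset.sum_eq_zero_iff_of_nonneg (fun j _ => by positivity)).mp h2 i
        (Finset.mem_univ i)
      exact pow_eq_zero_iff two_ne_zero |>.mp h3
    have hT0 : T = 0 := by rw [hTtr]; exact Finset.sum_eq_zero fun i _ => hall i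
    rw [hT0] at htr; exact lt_irrefl 0 htr
  have hεpos : 0 < ε := hε.1
  have hdε : 0 < (d : ℝ) - 1 + ε := by
    have : (1 : ℝ) ≤ d := by exact_mod_cast hd
    linarith
  have hT2 : 0 < T ^ 2 := by positivity
  have hcor : S * ((d : ℝ) - 1 + ε) ≤ T ^ 2 := by
    have := (div_le_div_iff₀ hT2 hdε).mp hcordes
    linarith
  set θ : ℝ := T / S with hθ
  set B : Fin d → Fin d → ℝ := fun i j => θ * A i j - (if i = j then (1 : ℝ) else 0) with hB
  have hrow : ∀ i, ∑ j, (B i j) ^ 2 = θ ^ 2 * (∑ j, (A i j) ^ 2) - 2 * θ * A i i + 1 := by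
    intro i
    have hterm : ∀ j, (B i j) ^ 2 =
        θ ^ 2 * (A i j) ^ 2 - 2 * θ * (if i = j then A i j else 0)
          + (if i = j then (1:ℝ) else 0) := by
      intro j
      by_cases h : i = j <;> simp [hB, h] <;> ring
    rw [Finset.sum_congr rfl fun j _ => hterm j]
    rw [Finset.sum_add_distrib, Finset.sum_sub_distrib, ← Finset.mul_sum, ← Finset.mul_sum]
    simp
  have hBsq : ∑ i, ∑ j, (B i j) ^ 2 ≤ 1 - ε := by
    have hexp : ∑ i, ∑ j, (B i j) ^ 2 = θ ^ 2 * S - 2 * θ * T + d := by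
      rw [Finset.sum_congr rfl fun i _ => hrow i]
      rw [Finset.sum_add_distrib, Finset.sum_sub_distrib, ← Finset.mul_sum, ← Finset.mul_sum]
      rw [← hSdef, ← hTtr]
      simp [Finset.card_univ]
    rw [hexp, hθ]
    have h1 : (T / S) ^ 2 * S - 2 * (T / S) * T + d = d - T ^ 2 / S := by
      field_simp; ring
    rw [h1]
    have h2 : (d : ℝ) - 1 + ε ≤ T ^ 2 / S := by
      rw [le_div_iff₀ hS]; linarith
    linarith
  have hkey : |∑ i, ∑ j, B i j * M i j| ≤
      Real.sqrt (1 - ε) * Real.sqrt (∑ i, ∑ j, (M i j) ^ 2) := by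
    have hCS : (∑ i, ∑ j, B i j * M i j) ^ 2 ≤
        (∑ i, ∑ j, (B i j) ^ 2) * (∑ i, ∑ j, (M i j) ^ 2) := by
      have h := Finset.sum_mul_sq_le_sq_mul_sq (Finset.univ : Finset (Fin d × Fin d))
        (fun p => B p.1 p.2) (fun p => M p.1 p.2)
      simpa only [Fintype.sum_prod_type] using h
    have h1 : |∑ i, ∑ j, B i j * M i j| ≤
        Real.sqrt ((∑ i, ∑ j, (B i j) ^ 2) * (∑ i, ∑ j, (M i j) ^ 2)) :=
      Real.abs_le_sqrt hCS
    rw [Real.sqrt_mul (by positivity) _] at h1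
    refine h1.trans (mul_le_mul_of_nonneg_right ?_ (Real.sqrt_nonneg _))
    exact Real.sqrt_le_sqrt hBsq
  have hsum : ∑ i, ∑ j, B i j * M i j = θ * (∑ i, ∑ j, A i j * M i j) - M.trace := by
    have hrowM : ∀ i, ∑ j, B i j * M i j = θ * (∑ j, A i j * M i j) - M i i := by
      intro i
      have hterm : ∀ j, B i j * M i j =
          θ * (A i j * M i j) - (if i = j then M i j else 0) := by
        intro j; by_cases h : i = j <;> simp [hB, h] <;> ring
      rw [Finset.sum_congr rfl fun j _ => hterm j]
      rw [Finset.sum_sub_distrib, ← Finset.mul_sum]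
      simp
    rw [Finset.sum_congr rfl fun i _ => hrowM i]
    rw [Finset.sum_sub_distrib, ← Finset.mul_sum]
    simp [Matrix.trace, Matrix.diag]
  rw [hθ] at hsum
  rw [← hsum]
  exact hkey
end

section
/- Let a^{ij} ∈ L^∞(Ω) be symmetric coefficients satisfying the ellipticity and Cordès conditions with parameter ε ∈ (0,1], and suppose the norm equivalence constant A > 0 satisfies ‖u‖_{H²} ≤ (1/A)‖Δu‖_{L²(Ω)} for all u ∈ H²(Ω) ∩ H₀¹(Ω). If ε > 1 − A², then u ∈ H²(Ω) ∩ H₀¹(Ω) with L u := Σ_{i,j} a^{ij} ∂²u/∂xᵢ∂xⱼ = 0 a.e. in Ω implies u = 0. Consequently ‖u‖_{L} := ‖L u‖_{L²(Ω)} is a norm on H²(Ω) ∩ H₀¹(Ω). -/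
open MeasureTheory

/-- `L²(Ω)` norm. -/
noncomputable def L2norm {d : ℕ} (Ω : Set (EuclideanSpace ℝ (Fin d)))
    (f : EuclideanSpace ℝ (Fin d) → ℝ) : ℝ :=
  Real.sqrt (∫ x in Ω, (f x) ^ 2)

/-- `L²(Ω)` norm of the gradient. -/
noncomputable def gradL2norm {d : ℕ} (Ω : Set (EuclideanSpace ℝ (Fin d)))
    (u : EuclideanSpace ℝ (Fin d) → ℝ) : ℝ :=
  Real.sqrt (∫ x in Ω, ∑ i, (pderiv1 u i x) ^ 2)

/-- The `H²(Ω)` norm. -/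
noncomputable def H2norm {d : ℕ} (Ω : Set (EuclideanSpace ℝ (Fin d)))
    (u : EuclideanSpace ℝ (Fin d) → ℝ) : ℝ :=
  L2norm Ω u + gradL2norm Ω u + ∑ i, ∑ j, L2norm Ω (pderiv2 u i j)

lemma sqrt_sum_le'' {ι : Type*} (s : Finset ι) (f : ι → ℝ) (hf : ∀ i ∈ s, 0 ≤ f i) :
    Real.sqrt (∑ i ∈ s, f i) ≤ ∑ i ∈ s, Real.sqrt (f i) := by
  have h1 : ∑ i ∈ s, f i ≤ (∑ i ∈ s, Real.sqrt (f i)) ^ 2 := by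
    calc ∑ i ∈ s, f i = ∑ i ∈ s, Real.sqrt (f i) ^ 2 :=
          Finset.sum_congr rfl fun i hi => (Real.sq_sqrt (hf i hi)).symm
      _ ≤ _ := Finset.sum_sq_le_sq_sum_of_nonneg fun i _ => Real.sqrt_nonneg _
  calc Real.sqrt (∑ i ∈ s, f i) ≤ Real.sqrt ((∑ i ∈ s, Real.sqrt (f i)) ^ 2) :=
        Real.sqrt_le_sqrt h1
    _ = _ := Real.sqrt_sq (Finset.sum_nonneg fun i _ => Real.sqrt_nonneg _)

lemma cordes_pointwise {d : ℕ} (ε : ℝ) (hε0 : 0 < ε) (lam : ℝ) (hlam : 0 < lam)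
    (b M : Fin d → Fin d → ℝ) (hell : ∀ i, lam ≤ b i i)
    (hc : (∑ i, ∑ j, (b i j) ^ 2) / (∑ i, b i i) ^ 2 ≤ 1 / ((d : ℝ) - 1 + ε))
    (hz : ∑ i, ∑ j, b i j * M i j = 0) :
    (∑ i, M i i) ^ 2 ≤ (1 - ε) * ∑ i, ∑ j, (M i j) ^ 2 := by
  rcases Nat.eq_zero_or_pos d with hd | hd
  · subst hd; simp
  have hd1 : (1 : ℝ) ≤ (d : ℝ) := by exact_mod_cast hd
  set T : ℝ := ∑ i, b i i with hT
  set S : ℝ := ∑ i, ∑ j, (b i j) ^ 2 with hS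
  have hδ : (0 : ℝ) < (d : ℝ) - 1 + ε := by linarith
  have hTpos : 0 < T := by
    have : (0:ℝ) < ∑ i : Fin d, lam := by
      rw [Finset.sum_const]; simp
      positivity
    exact lt_of_lt_of_le this (Finset.sum_le_sum fun i _ => hell i)
  have i0 : Fin d := ⟨0, hd⟩
  have hSpos : 0 < S := by
    have h1 : lam ^ 2 ≤ (b i0 i0) ^ 2 := by nlinarith [hell i0]
    have h2 : (b i0 i0) ^ 2 ≤ ∑ j, (b i0 j) ^ 2 :=
      Finset.single_le_sum (f := fun j => (b i0 j) ^ 2) (fun j _ => sq_nonneg _)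
        (Finset.mem_univ i0)
    have h3 : (∑ j, (b i0 j) ^ 2) ≤ S :=
      Finset.single_le_sum (f := fun i => ∑ j, (b i j) ^ 2)
        (fun i _ => Finset.sum_nonneg fun j _ => sq_nonneg _) (Finset.mem_univ i0)
    nlinarith
  have hST : S * ((d : ℝ) - 1 + ε) ≤ T ^ 2 := by
    rw [div_le_div_iff₀ (by positivity) hδ] at hc
    nlinarith
  set θ : ℝ := T / S with hθ
  set c : Fin d → Fin d → ℝ := fun i j => (if i = j then (1:ℝ) else 0) - θ * b i j with hcdef
  have e1 : ∑ i, M i i = ∑ i, ∑ j, c i j * M i j := by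
    have : ∑ i, ∑ j, c i j * M i j
        = (∑ i, ∑ j, (if i = j then (1:ℝ) else 0) * M i j)
          - θ * ∑ i, ∑ j, b i j * M i j := by
      rw [Finset.mul_sum, ← Finset.sum_sub_distrib]
      refine Finset.sum_congr rfl fun i _ => ?_
      rw [Finset.mul_sum, ← Finset.sum_sub_distrib]
      refine Finset.sum_congr rfl fun j _ => ?_
      simp only [hcdef]; ring
    rw [this, hz, mul_zero, sub_zero]
    refine (Finset.sum_congr rfl fun i _ => ?_).symm
    simp [Finset.sum_ite_eq]
  have hCS : (∑ i, ∑ j, c i j * M i j) ^ 2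
      ≤ (∑ i, ∑ j, (c i j) ^ 2) * (∑ i, ∑ j, (M i j) ^ 2) := by
    have := Finset.sum_mul_sq_le_sq_mul_sq (Finset.univ : Finset (Fin d × Fin d))
      (fun p => c p.1 p.2) (fun p => M p.1 p.2)
    simpa [Fintype.sum_prod_type] using this
  have hC : ∑ i, ∑ j, (c i j) ^ 2 = (d : ℝ) - 2 * θ * T + θ ^ 2 * S := by
    have expand : ∀ i j, (c i j) ^ 2 =
        (if i = j then (1:ℝ) else 0) - 2 * θ * (if i = j then b i j else 0)
          + θ ^ 2 * (b i j) ^ 2 := by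
      intro i j; by_cases h : i = j <;> simp [hcdef, h] <;> ring
    simp_rw [expand, Finset.sum_add_distrib, Finset.sum_sub_distrib, ← Finset.mul_sum,
      Finset.sum_ite_eq, Finset.mem_univ, if_true, Finset.sum_const, Finset.card_univ]
    simp [hT, hS]
  have hCle : ∑ i, ∑ j, (c i j) ^ 2 ≤ 1 - ε := by
    rw [hC]
    have hth : θ = T / S := hθ
    have h2 : 2 * θ * T = 2 * T ^ 2 / S := by rw [hth]; ring
    have h3 : θ ^ 2 * S = T ^ 2 / S := by rw [hth]; field_simp
    rw [h2, h3]
    have h4 : (d : ℝ) - 1 + ε ≤ T ^ 2 / S := (le_div_iff₀ hSpos).2 (by linarith)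
    have h5 : (d:ℝ) - 2 * T ^ 2 / S + T ^ 2 / S = (d:ℝ) - T ^ 2 / S := by ring
    rw [h5]; linarith
  have hM2 : 0 ≤ ∑ i, ∑ j, (M i j) ^ 2 :=
    Finset.sum_nonneg fun i _ => Finset.sum_nonneg fun j _ => sq_nonneg _
  calc (∑ i, M i i) ^ 2 = (∑ i, ∑ j, c i j * M i j) ^ 2 := by rw [e1]
    _ ≤ (∑ i, ∑ j, (c i j) ^ 2) * (∑ i, ∑ j, (M i j) ^ 2) := hCS
    _ ≤ (1 - ε) * ∑ i, ∑ j, (M i j) ^ 2 := mul_le_mul_of_nonneg_right hCle hM2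

lemma contDiff_pderiv1 {d : ℕ} {u : EuclideanSpace ℝ (Fin d) → ℝ}
    (hu : ContDiff ℝ 2 u) (j : Fin d) : ContDiff ℝ 1 (pderiv1 u j) := by
  have h := hu.fderiv_right (m := 1) (by norm_num)
  exact h.clm_apply contDiff_const

lemma continuous_pderiv2 {d : ℕ} {u : EuclideanSpace ℝ (Fin d) → ℝ}
    (hu : ContDiff ℝ 2 u) (i j : Fin d) : Continuous (pderiv2 u i j) := by
  have h1 := contDiff_pderiv1 hu j
  have h := h1.fderiv_right (m := 0) (by norm_num)
  exact (h.clm_apply contDiff_const).continuous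

/-- Definiteness of `u ↦ ‖Lu‖_{L²(Ω)}` for a Cordès elliptic operator
`Lu = Σ a^{ij} ∂ᵢ∂ⱼu`: if `ε > 1 − A²`, then `Lu = 0` in `Ω` together with
zero boundary values force `u = 0`. -/
theorem stmt8 {d : ℕ} (Ω : Set (EuclideanSpace ℝ (Fin d)))
    (hΩo : IsOpen Ω) (hΩb : Bornology.IsBounded Ω)
    (a : Fin d → Fin d → EuclideanSpace ℝ (Fin d) → ℝ)
    (hsym : ∀ i j, ∀ x ∈ Ω, a i j x = a j i x)
    (ε : ℝ) (hε : ε ∈ Set.Ioc (0 : ℝ) 1)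
    (lam Lam : ℝ) (hlam : 0 < lam)
    (hell : ∀ x ∈ Ω, ∀ η : Fin d → ℝ,
      lam * ∑ i, (η i) ^ 2 ≤ (∑ i, ∑ j, a i j x * η i * η j) ∧
      (∑ i, ∑ j, a i j x * η i * η j) ≤ Lam * ∑ i, (η i) ^ 2)
    (hcordes : ∀ x ∈ Ω,
      (∑ i, ∑ j, (a i j x) ^ 2) / (∑ i, a i i x) ^ 2 ≤ 1 / ((d : ℝ) - 1 + ε))
    (A : ℝ) (hA : 0 < A)
    (hnorm : ∀ w : EuclideanSpace ℝ (Fin d) → ℝ, ContDiff ℝ 2 w →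
      (∀ x ∈ frontier Ω, w x = 0) → H2norm Ω w ≤ (1 / A) * L2norm Ω (lap w))
    (hεA : ε > 1 - A ^ 2)
    (u : EuclideanSpace ℝ (Fin d) → ℝ) (hu : ContDiff ℝ 2 u)
    (hubd : ∀ x ∈ frontier Ω, u x = 0)
    (hLu : ∀ x ∈ Ω, (∑ i, ∑ j, a i j x * pderiv2 u i j x) = 0) :
    ∀ x ∈ Ω, u x = 0 := by
  obtain ⟨hε0, hε1⟩ := hε
  have hpd2 : ∀ i j, Continuous (pderiv2 u i j) := continuous_pderiv2 hu
  have hlapc : Continuous (lap u) := continuous_finset_sum _ fun i _ => hpd2 i i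
  have hK : IsCompact (closure Ω) := hΩb.isCompact_closure
  have hmeas : MeasurableSet Ω := hΩo.measurableSet
  have hint : ∀ f : EuclideanSpace ℝ (Fin d) → ℝ, Continuous f →
      IntegrableOn (fun x => f x ^ 2) Ω volume := fun f hf =>
    (((hf.pow 2).continuousOn).integrableOn_compact hK).mono_set subset_closure
  -- pointwise Cordès estimate
  have hpt : ∀ x ∈ Ω, (lap u x) ^ 2 ≤ (1 - ε) * ∑ i, ∑ j, (pderiv2 u i j x) ^ 2 := by
    intro x hx
    have hell' : ∀ i, lam ≤ a i i x := by
      intro i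
      have h := (hell x hx (fun k => if k = i then 1 else 0)).1
      simpa [Finset.sum_ite_eq', mul_ite, ite_mul, apply_ite (· ^ (2:ℕ))] using h
    exact cordes_pointwise ε hε0 lam hlam (fun i j => a i j x)
      (fun i j => pderiv2 u i j x) hell' (hcordes x hx) (hLu x hx)
  -- integrate
  have hintM : ∀ i j, IntegrableOn (fun x => (pderiv2 u i j x) ^ 2) Ω volume :=
    fun i j => hint _ (hpd2 i j)
  have hI1 : ∫ x in Ω, (lap u x) ^ 2
      ≤ (1 - ε) * ∑ i, ∑ j, ∫ x in Ω, (pderiv2 u i j x) ^ 2 := by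
    have hRHSint : IntegrableOn
        (fun x => (1 - ε) * ∑ i, ∑ j, (pderiv2 u i j x) ^ 2) Ω volume :=
      (integrable_finset_sum _ fun i _ =>
        integrable_finset_sum _ fun j _ => hintM i j).const_mul _
    calc ∫ x in Ω, (lap u x) ^ 2
        ≤ ∫ x in Ω, (1 - ε) * ∑ i, ∑ j, (pderiv2 u i j x) ^ 2 :=
          setIntegral_mono_on (hint _ hlapc) hRHSint hmeas hpt
      _ = (1 - ε) * ∫ x in Ω, ∑ i, ∑ j, (pderiv2 u i j x) ^ 2 :=
          integral_const_mul _ _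
      _ = (1 - ε) * ∑ i, ∑ j, ∫ x in Ω, (pderiv2 u i j x) ^ 2 := by
          rw [integral_finset_sum _ (fun i _ =>
            integrable_finset_sum _ fun j _ => hintM i j)]
          congr 1
          exact Finset.sum_congr rfl fun i _ =>
            integral_finset_sum _ fun j _ => hintM i j
  have hJnn : ∀ i j : Fin d, (0:ℝ) ≤ ∫ x in Ω, (pderiv2 u i j x) ^ 2 :=
    fun i j => integral_nonneg fun x => sq_nonneg _
  have h1ε : (0:ℝ) ≤ 1 - ε := by linarith
  have hN : L2norm Ω (lap u) ≤ Real.sqrt (1 - ε) * ∑ i, ∑ j, L2norm Ω (pderiv2 u i j) := by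
    unfold L2norm
    calc Real.sqrt (∫ x in Ω, (lap u x) ^ 2)
        ≤ Real.sqrt ((1 - ε) * ∑ i, ∑ j, ∫ x in Ω, (pderiv2 u i j x) ^ 2) :=
          Real.sqrt_le_sqrt hI1
      _ = Real.sqrt (1 - ε) * Real.sqrt (∑ i, ∑ j, ∫ x in Ω, (pderiv2 u i j x) ^ 2) :=
          Real.sqrt_mul h1ε _
      _ ≤ Real.sqrt (1 - ε) * ∑ i, ∑ j, Real.sqrt (∫ x in Ω, (pderiv2 u i j x) ^ 2) := by
          refine mul_le_mul_of_nonneg_left ?_ (Real.sqrt_nonneg _)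
          calc Real.sqrt (∑ i, ∑ j, ∫ x in Ω, (pderiv2 u i j x) ^ 2)
              ≤ ∑ i, Real.sqrt (∑ j, ∫ x in Ω, (pderiv2 u i j x) ^ 2) :=
                sqrt_sum_le'' _ _ fun i _ => Finset.sum_nonneg fun j _ => hJnn i j
            _ ≤ ∑ i, ∑ j, Real.sqrt (∫ x in Ω, (pderiv2 u i j x) ^ 2) :=
                Finset.sum_le_sum fun i _ => sqrt_sum_le'' _ _ fun j _ => hJnn i j
  have hL2nn : 0 ≤ L2norm Ω u := Real.sqrt_nonneg _
  have hgradnn : 0 ≤ gradL2norm Ω u := Real.sqrt_nonneg _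
  have hSle : ∑ i, ∑ j, L2norm Ω (pderiv2 u i j) ≤ H2norm Ω u := by
    unfold H2norm; linarith
  have hH2 : H2norm Ω u ≤ (1 / A) * L2norm Ω (lap u) := hnorm u hu hubd
  have hNnn : 0 ≤ L2norm Ω (lap u) := Real.sqrt_nonneg _
  have hsA : Real.sqrt (1 - ε) < A := by
    rw [Real.sqrt_lt' hA]; linarith
  have hN0 : L2norm Ω (lap u) = 0 := by
    have hchain : L2norm Ω (lap u) ≤ Real.sqrt (1 - ε) * ((1 / A) * L2norm Ω (lap u)) :=
      hN.trans (mul_le_mul_of_nonneg_left (hSle.trans hH2) (Real.sqrt_nonneg _))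
    by_contra h0
    have hNpos : 0 < L2norm Ω (lap u) := lt_of_le_of_ne hNnn (Ne.symm h0)
    have h1 : Real.sqrt (1 - ε) * ((1 / A) * L2norm Ω (lap u))
        < A * ((1 / A) * L2norm Ω (lap u)) :=
      mul_lt_mul_of_pos_right hsA (by positivity)
    have h2 : A * ((1 / A) * L2norm Ω (lap u)) = L2norm Ω (lap u) := by field_simp
    linarith
  have hH20 : H2norm Ω u ≤ 0 := by rw [hN0] at hH2; simpa using hH2
  have hL2u : L2norm Ω u = 0 := by
    have h3 : 0 ≤ ∑ i, ∑ j, L2norm Ω (pderiv2 u i j) :=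
      Finset.sum_nonneg fun i _ => Finset.sum_nonneg fun j _ => Real.sqrt_nonneg _
    have h4 : H2norm Ω u = L2norm Ω u + gradL2norm Ω u
        + ∑ i, ∑ j, L2norm Ω (pderiv2 u i j) := rfl
    linarith
  have hiu : ∫ x in Ω, (u x) ^ 2 = 0 := by
    have h1 : ∫ x in Ω, (u x) ^ 2 ≤ 0 := Real.sqrt_eq_zero'.1 hL2u
    have h2 : (0:ℝ) ≤ ∫ x in Ω, (u x) ^ 2 := integral_nonneg fun x => sq_nonneg _
    linarith
  have hintu : IntegrableOn (fun x => (u x) ^ 2) Ω volume := hint _ hu.continuous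
  have hae : (fun x => (u x) ^ 2) =ᵐ[volume.restrict Ω] 0 :=
    (integral_eq_zero_iff_of_nonneg (fun x => sq_nonneg _) hintu).1 hiu
  intro x hx
  by_contra hux
  have hV : IsOpen (Ω ∩ {y | u y ≠ 0}) := by
    have : IsOpen {y | u y ≠ 0} := isOpen_compl_singleton.preimage hu.continuous
    exact hΩo.inter this
  have hVne : (Ω ∩ {y | u y ≠ 0}).Nonempty := ⟨x, hx, hux⟩
  have hpos : 0 < volume (Ω ∩ {y | u y ≠ 0}) := hV.measure_pos volume hVne
  have hm : MeasurableSet {y : EuclideanSpace ℝ (Fin d) | u y ^ 2 ≠ 0} := by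
    have : MeasurableSet {y : EuclideanSpace ℝ (Fin d) | u y ^ 2 = 0} :=
      (hu.continuous.pow 2).measurable (measurableSet_singleton 0)
    exact this.compl
  have hnull : volume.restrict Ω {y | u y ^ 2 ≠ 0} = 0 := by
    have h := hae
    rw [Filter.EventuallyEq, ae_iff] at h
    simpa using h
  have hz : volume (Ω ∩ {y | u y ≠ 0}) = 0 := by
    rw [Measure.restrict_apply hm] at hnull
    refine measure_mono_null ?_ hnull
    rintro y ⟨hyΩ, hyu⟩
    exact ⟨pow_ne_zero 2 hyu, hyΩ⟩
  exact absurd hz hpos.ne'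
end
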